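/- arXiv:2412.07357 — 2 statements merged into one kernel-verified Lean document; each statement's English description precedes it below -/
import Mathlib

section
/- Let s be a notch profile and θ ∈ W. Set ρ[θ] = inf{x ∈ ℝ : θ(x) ≥ 0} and define θ̃(x) = θ(x) for x ≤ ρ[θ] and θ̃(x) = |θ(x)| for x > ρ[θ], and let θ† be the best non-decreasing envelope: θ†(x) = inf_{y ∈ [x,∞)} θ̃(y) for x ≤ ρ[θ] and θ†(x) = sup_{y ∈ (−∞,x]} θ̃(y) for x > ρ[θ]. Then θ̃ and θ† belong to W, θ† is non-decreasing, and E_s(θ†) ≤ E_s(θ̃) ≤ E_s(θ). -/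
open MeasureTheory Real Filter

noncomputable section

/-- `θ ∈ 𝒲` : locally absolutely continuous with `θ' ∈ L²` and `cos θ ∈ L²`. -/
def MemScrW (θ : ℝ → ℝ) : Prop :=
  (∀ x y : ℝ, θ y = θ x + ∫ t in x..y, deriv θ t) ∧
  MemLp (deriv θ) 2 volume ∧
  MemLp (fun x => Real.cos (θ x)) 2 volume

/-- The energy `E_s(θ) = (1/2) ∫ (θ'² + cos²θ) s`. -/
def Es (s θ : ℝ → ℝ) : ℝ :=
  (1/2) * ∫ x : ℝ, ((deriv θ x)^2 + (Real.cos (θ x))^2) * s x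

/-- A notch profile. -/
def NotchProfile (s₀ a : ℝ) (s : ℝ → ℝ) : Prop :=
  (∃ K : NNReal, LipschitzWith K s) ∧ (∀ x, s₀ ≤ s x) ∧ (∀ x, s x ≤ 1) ∧
  (∀ x : ℝ, a < |x| → s x = 1)

/-- `(s θ')' + s cos θ sin θ = 0` in the sense of distributions on `ℝ`. -/
def IsCriticalPoint (s θ : ℝ → ℝ) : Prop :=
  ∀ φ : ℝ → ℝ, ContDiff ℝ (⊤ : ℕ∞) φ → HasCompactSupport φ →
    ∫ x : ℝ, s x * deriv θ x * deriv φ x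
      = ∫ x : ℝ, s x * Real.cos (θ x) * Real.sin (θ x) * φ x

/-- `θ ∈ W` : `θ ∈ 𝒲` with limits `±π/2` at `±∞` and range in `[-π/2, π/2]`. -/
def MemW (θ : ℝ → ℝ) : Prop :=
  MemScrW θ ∧ Tendsto θ atBot (nhds (-(π/2))) ∧ Tendsto θ atTop (nhds (π/2)) ∧
  ∀ x : ℝ, θ x ∈ Set.Icc (-(π/2)) (π/2)

section
open Set in
lemma acFTC {G w : ℝ → ℝ} (hwm : Measurable w) (hw0 : ∀ x, 0 ≤ w x)
    (hw : MeasureTheory.LocallyIntegrable w volume)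
    (hG : ∀ a b : ℝ, a ≤ b → |G b - G a| ≤ ∫ t in a..b, w t) :
    ∃ k : ℝ → ℝ, Measurable k ∧ (∀ᵐ x, HasDerivAt G (k x) x) ∧
      (∀ᵐ x, |k x| ≤ w x) ∧ MeasureTheory.LocallyIntegrable k volume ∧
      ∀ a b : ℝ, G b = G a + ∫ t in a..b, k t := by
  have hint : ∀ a b : ℝ, IntervalIntegrable w volume a b := fun a b =>
    (hw.integrableOn_isCompact isCompact_uIcc).intervalIntegrable
  set H : ℝ → ℝ := fun x => ∫ t in (0:ℝ)..x, w t with hH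
  have hHadd : ∀ a b : ℝ, H b - H a = ∫ t in a..b, w t := by
    intro a b
    rw [hH]
    simp only
    rw [← intervalIntegral.integral_add_adjacent_intervals (hint 0 a) (hint a b)]
    ring
  have hHc : Continuous H := intervalIntegral.continuous_primitive hint 0
  have hGH : ∀ a b : ℝ, |G b - G a| ≤ |H b - H a| := by
    intro a b
    rcases le_total a b with hab | hab
    · rw [hHadd]
      exact (hG a b hab).trans (le_abs_self _)
    · rw [abs_sub_comm (G b), abs_sub_comm (H b), hHadd]
      exact (hG b a hab).trans (le_abs_self _)
  have hGc : Continuous G := by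
    rw [continuous_iff_continuousAt]
    intro x
    rw [ContinuousAt, tendsto_iff_dist_tendsto_zero]
    apply squeeze_zero (fun y => dist_nonneg) (g := fun y => dist (H y) (H x))
    · intro y
      simpa [Real.dist_eq] using hGH x y
    · rw [← dist_self (H x)]
      exact ((hHc.tendsto x).dist tendsto_const_nhds)
  set P : ℝ → ℝ := fun x => H x - G x with hPdef
  set Q : ℝ → ℝ := fun x => H x + G x with hQdef
  have hP : Monotone P := by
    intro a b hab
    have h1 := (abs_le.1 (hG a b hab)).2
    have h2 := hHadd a b
    simp only [hPdef]
    linarith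
  have hQ : Monotone Q := by
    intro a b hab
    have h1 := (abs_le.1 (hG a b hab)).1
    have h2 := hHadd a b
    simp only [hQdef]
    linarith
  have hPc : Continuous P := hHc.sub hGc
  have hQc : Continuous Q := hHc.add hGc
  set μP := hP.stieltjesFunction.measure with hμPdef
  set μQ := hQ.stieltjesFunction.measure with hμQdef
  have hPs : ∀ x, hP.stieltjesFunction x = P x := by
    intro x
    rw [hP.stieltjesFunction_eq]
    exact rightLim_eq_of_tendsto
      ((hPc.tendsto x).mono_left nhdsWithin_le_nhds)
  have hQs : ∀ x, hQ.stieltjesFunction x = Q x := by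
    intro x
    rw [hQ.stieltjesFunction_eq]
    exact rightLim_eq_of_tendsto
      ((hQc.tendsto x).mono_left nhdsWithin_le_nhds)
  have hμP : ∀ a b : ℝ, μP (Set.Ioc a b) = ENNReal.ofReal (P b - P a) := by
    intro a b
    rw [hμPdef, StieltjesFunction.measure_Ioc, hPs, hPs]
  have hμQ : ∀ a b : ℝ, μQ (Set.Ioc a b) = ENNReal.ofReal (Q b - Q a) := by
    intro a b
    rw [hμQdef, StieltjesFunction.measure_Ioc, hQs, hQs]
  set ν := volume.withDensity (fun x => ENNReal.ofReal (2 * w x)) with hνdef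
  have hν : ∀ a b : ℝ, a ≤ b → ν (Set.Ioc a b) = ENNReal.ofReal (∫ t in a..b, 2 * w t) := by
    intro a b hab
    rw [hνdef, withDensity_apply _ measurableSet_Ioc,
      intervalIntegral.integral_of_le hab, ← ofReal_integral_eq_lintegral_ofReal]
    · exact (hint a b).1.const_mul 2
    · filter_upwards with x using mul_nonneg (by norm_num) (hw0 x)
  haveI : IsLocallyFiniteMeasure (μP + μQ) := by
    constructor
    intro x
    rcases (μP.finiteAt_nhds x).exists_mem_basis (nhds_basis_opens x) with ⟨u, ⟨hxu, hu⟩, hufin⟩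
    rcases (μQ.finiteAt_nhds x).exists_mem_basis (nhds_basis_opens x) with ⟨v, ⟨hxv, hv⟩, hvfin⟩
    refine ⟨u ∩ v, (hu.inter hv).mem_nhds ⟨hxu, hxv⟩, ?_⟩
    rw [Measure.add_apply]
    exact ENNReal.add_lt_top.2 ⟨lt_of_le_of_lt (measure_mono Set.inter_subset_left) hufin,
      lt_of_le_of_lt (measure_mono Set.inter_subset_right) hvfin⟩
  have key : μP + μQ = ν := by
    refine Measure.ext_of_Ioc _ _ (fun a b hab => ?_)
    rw [Measure.add_apply, hμP, hμQ, hν a b hab.le,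
      ← ENNReal.ofReal_add (sub_nonneg.2 (hP hab.le)) (sub_nonneg.2 (hQ hab.le))]
    congr 1
    have h2 : (∫ t in a..b, 2 * w t) = 2 * ∫ t in a..b, w t := by
      rw [intervalIntegral.integral_const_mul]
    have h3 := hHadd a b
    simp only [hPdef, hQdef]
    linarith
  have hPν : μP ≤ ν := key ▸ Measure.le_add_right le_rfl
  have hQν : μQ ≤ ν := key ▸ Measure.le_add_left le_rfl
  have hPac : μP ≪ volume :=
    (Measure.absolutelyContinuous_of_le hPν).trans (withDensity_absolutelyContinuous _ _)
  have hQac : μQ ≪ volume :=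
    (Measure.absolutelyContinuous_of_le hQν).trans (withDensity_absolutelyContinuous _ _)
  set kP : ℝ → ℝ := fun x => (μP.rnDeriv volume x).toReal with hkP
  set kQ : ℝ → ℝ := fun x => (μQ.rnDeriv volume x).toReal with hkQ
  have hFTC : ∀ (R : ℝ → ℝ) (hR : Monotone R)
      (hac : hR.stieltjesFunction.measure ≪ volume)
      (hμR : ∀ a b : ℝ, hR.stieltjesFunction.measure (Set.Ioc a b)
         = ENNReal.ofReal (R b - R a)),
      ∀ a b : ℝ, a ≤ b →
      (IntegrableOn (fun x => (hR.stieltjesFunction.measure.rnDeriv volume x).toReal)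
          (Set.Ioc a b) volume ∧
        R b - R a = ∫ t in Set.Ioc a b,
          (hR.stieltjesFunction.measure.rnDeriv volume t).toReal) := by
    intro R hR hac hμR a b hab
    set μR := hR.stieltjesFunction.measure
    have hwd : μR = volume.withDensity (μR.rnDeriv volume) :=
      (Measure.withDensity_rnDeriv_eq _ _ hac).symm
    have hlt : (∫⁻ t in Set.Ioc a b, μR.rnDeriv volume t) ≠ ⊤ := by
      rw [← withDensity_apply _ measurableSet_Ioc, ← hwd, hμR]
      exact ENNReal.ofReal_ne_top
    have hInt : IntegrableOn (fun x => (μR.rnDeriv volume x).toReal) (Set.Ioc a b) volume :=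
      integrable_toReal_of_lintegral_ne_top (Measure.measurable_rnDeriv _ _).aemeasurable hlt
    refine ⟨hInt, ?_⟩
    have h1 : μR (Set.Ioc a b) = ∫⁻ t in Set.Ioc a b, μR.rnDeriv volume t := by
      conv_lhs => rw [hwd]
      rw [withDensity_apply _ measurableSet_Ioc]
    have h2 : ∫ t in Set.Ioc a b, (μR.rnDeriv volume t).toReal
        = (∫⁻ t in Set.Ioc a b, μR.rnDeriv volume t).toReal :=
      integral_toReal (Measure.measurable_rnDeriv _ _).aemeasurable.restrict
        (ae_restrict_of_ae (Measure.rnDeriv_lt_top _ _))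
    rw [h2, ← h1, hμR, ENNReal.toReal_ofReal (sub_nonneg.2 (hR hab))]
  set k : ℝ → ℝ := fun x => (kQ x - kP x) / 2 with hk
  have hkm : Measurable k := by
    apply Measurable.div_const
    exact ((Measure.measurable_rnDeriv _ _).ennreal_toReal.sub
      (Measure.measurable_rnDeriv _ _).ennreal_toReal)
  have hGPQ : ∀ x, G x = (Q x - P x) / 2 := by
    intro x; simp only [hPdef, hQdef]; ring
  have hderiv : ∀ᵐ x, HasDerivAt G (k x) x := by
    filter_upwards [hP.ae_hasDerivAt, hQ.ae_hasDerivAt] with x hxP hxQ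
    have h : HasDerivAt (fun y => (Q y - P y) / 2) (k x) x := (hxQ.sub hxP).div_const 2
    exact h.congr_of_eventuallyEq (by filter_upwards with y using (hGPQ y))
  have hbound : ∀ᵐ x, |k x| ≤ w x := by
    have h1 := Measure.rnDeriv_add' μP μQ volume
    have h2 : (μP + μQ).rnDeriv volume =ᵐ[volume] fun x => ENNReal.ofReal (2 * w x) := by
      rw [key]
      exact Measure.rnDeriv_withDensity volume (by fun_prop)
    filter_upwards [h1, h2, Measure.rnDeriv_lt_top μP volume, Measure.rnDeriv_lt_top μQ volume]
      with x hx1 hx2 hxP hxQ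
    have hsum : kP x + kQ x = 2 * w x := by
      rw [hkP, hkQ]
      simp only
      rw [← ENNReal.toReal_add hxP.ne hxQ.ne]
      have h5 : μP.rnDeriv volume x + μQ.rnDeriv volume x = ENNReal.ofReal (2 * w x) := by
        rw [← hx2, hx1]; simp
      rw [h5, ENNReal.toReal_ofReal (mul_nonneg (by norm_num) (hw0 x))]
    have h3 : (0:ℝ) ≤ kP x := ENNReal.toReal_nonneg
    have h4 : (0:ℝ) ≤ kQ x := ENNReal.toReal_nonneg
    rw [hk, abs_le]
    constructor
    · simp only; nlinarith
    · simp only; nlinarith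
  have hkloc : MeasureTheory.LocallyIntegrable k volume := by
    intro x
    rcases hw x with ⟨u, hu, huint⟩
    refine ⟨u, hu, ?_⟩
    refine Integrable.mono' huint hkm.aestronglyMeasurable.restrict ?_
    exact ae_restrict_of_ae (hbound.mono fun y hy => by
      simpa [Real.norm_eq_abs] using hy)
  refine ⟨k, hkm, hderiv, hbound, hkloc, ?_⟩
  have main : ∀ a b : ℝ, a ≤ b → G b = G a + ∫ t in a..b, k t := by
    intro a b hab
    obtain ⟨hIP, hveP⟩ := hFTC P hP hPac hμP a b hab
    obtain ⟨hIQ, hveQ⟩ := hFTC Q hQ hQac hμQ a b hab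
    have h6 : ∫ t in a..b, k t
        = ((∫ t in Set.Ioc a b, kQ t) - ∫ t in Set.Ioc a b, kP t) / 2 := by
      rw [intervalIntegral.integral_of_le hab]
      rw [← integral_sub hIQ hIP, ← integral_div]
    rw [h6, ← hveP, ← hveQ, hGPQ a, hGPQ b]
    ring
  intro a b
  rcases le_total a b with hab | hab
  · exact main a b hab
  · have := main b a hab
    rw [intervalIntegral.integral_symm]
    linarith
end

lemma energy_le (s f h : ℝ → ℝ) (hsm : Measurable s) (hs0 : ∀ x, 0 ≤ s x)
    (hfm : Measurable f)
    (hint : Integrable (fun x => ((deriv h x)^2 + (Real.cos (h x))^2) * s x) volume)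
    (hle : ∀ᵐ x, (deriv f x)^2 ≤ (deriv h x)^2)
    (hcos : ∀ x, |Real.cos (f x)| ≤ |Real.cos (h x)|) :
    Integrable (fun x => ((deriv f x)^2 + (Real.cos (f x))^2) * s x) volume ∧
      Es s f ≤ Es s h := by
  have hae : ∀ᵐ x, ((deriv f x)^2 + (Real.cos (f x))^2) * s x
      ≤ ((deriv h x)^2 + (Real.cos (h x))^2) * s x := by
    filter_upwards [hle] with x hx
    have h1 := pow_le_pow_left₀ (abs_nonneg _) (hcos x) 2
    rw [sq_abs, sq_abs] at h1
    exact mul_le_mul_of_nonneg_right (by linarith) (hs0 x)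
  have hfmeas : AEStronglyMeasurable
      (fun x => ((deriv f x)^2 + (Real.cos (f x))^2) * s x) volume :=
    ((((measurable_deriv f).pow_const 2).add
      ((Real.measurable_cos.comp hfm).pow_const 2)).mul hsm).aestronglyMeasurable
  have hIf : Integrable (fun x => ((deriv f x)^2 + (Real.cos (f x))^2) * s x) volume := by
    refine hint.mono' hfmeas ?_
    filter_upwards [hae] with x hx
    rw [Real.norm_eq_abs, abs_of_nonneg (mul_nonneg (by positivity) (hs0 x))]
    exact hx
  refine ⟨hIf, ?_⟩
  unfold Es
  exact mul_le_mul_of_nonneg_left (integral_mono_ae hIf hint hae) (by norm_num)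

/-- the reflection `θ̃` and the best non-decreasing envelope `θ†`
stay in `W` and do not increase the energy. -/
theorem tilde_dag_decrease_energy (s₀ a : ℝ) (s : ℝ → ℝ)
    (hs₀ : 0 < s₀) (hs₀1 : s₀ < 1) (ha : 0 < a)
    (hnotch : NotchProfile s₀ a s)
    (θ : ℝ → ℝ) (hθ : MemW θ) :
    let ρ : ℝ := sInf {x : ℝ | 0 ≤ θ x}
    let θt : ℝ → ℝ := fun x => if x ≤ ρ then θ x else |θ x|
    let θd : ℝ → ℝ := fun x =>
      if x ≤ ρ then sInf (θt '' Set.Ici x) else sSup (θt '' Set.Iic x)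
    MemW θt ∧ MemW θd ∧ Monotone θd ∧ Es s θd ≤ Es s θt ∧ Es s θt ≤ Es s θ := by
  intro ρ θt θd
  obtain ⟨⟨hFTCθ, hg2, hcos2⟩, hbot, htop, hrange⟩ := hθ
  have hθt : θt = fun x => if x ≤ ρ then θ x else |θ x| := rfl
  have hθd : θd = fun x =>
      if x ≤ ρ then sInf (θt '' Set.Ici x) else sSup (θt '' Set.Iic x) := rfl
  -- basic facts about θ
  have hgm : Measurable (deriv θ) := measurable_deriv θ
  have hgloc : MeasureTheory.LocallyIntegrable (deriv θ) volume :=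
    hg2.locallyIntegrable one_le_two
  have hwm : Measurable (fun x => |deriv θ x|) := hgm.abs
  have hw0 : ∀ x, (0:ℝ) ≤ |deriv θ x| := fun x => abs_nonneg _
  have hwloc : MeasureTheory.LocallyIntegrable (fun x => |deriv θ x|) volume := by
    intro x
    rcases hgloc x with ⟨u, hu, hint⟩
    exact ⟨u, hu, hint.abs⟩
  have hgint : ∀ a b : ℝ, IntervalIntegrable (deriv θ) volume a b := fun a b =>
    (hgloc.integrableOn_isCompact isCompact_uIcc).intervalIntegrable
  have habs : ∀ a b : ℝ, a ≤ b → |θ b - θ a| ≤ ∫ t in a..b, |deriv θ t| := by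
    intro a b hab
    have h1 : θ b - θ a = ∫ t in a..b, deriv θ t := by
      have := hFTCθ a b; linarith
    rw [h1]
    exact intervalIntegral.abs_integral_le_integral_abs hab
  have hθc : Continuous θ := by
    have h1 : Continuous (fun y => θ 0 + ∫ t in (0:ℝ)..y, deriv θ t) :=
      continuous_const.add (intervalIntegral.continuous_primitive hgint 0)
    have h2 : θ = fun y => θ 0 + ∫ t in (0:ℝ)..y, deriv θ t := funext fun y => hFTCθ 0 y
    rw [h2]; exact h1
  -- facts about ρ
  have hρ : ρ = sInf {x : ℝ | 0 ≤ θ x} := rfl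
  have hSne : {x : ℝ | 0 ≤ θ x}.Nonempty := by
    have h1 : ∀ᶠ x in atTop, 0 < θ x := htop.eventually (eventually_gt_nhds (by positivity))
    rcases h1.exists with ⟨x, hx⟩
    exact ⟨x, hx.le⟩
  have hSbdd : BddBelow {x : ℝ | 0 ≤ θ x} := by
    have h1 : ∀ᶠ x in atBot, θ x < 0 := hbot.eventually (eventually_lt_nhds (by simpa using pi_pos))
    rcases eventually_atBot.1 h1 with ⟨b, hb⟩
    refine ⟨b, fun y hy => ?_⟩
    by_contra hby
    exact absurd hy (by simpa using not_le.2 (hb y (le_of_not_ge hby)))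
  have hSclosed : IsClosed {x : ℝ | 0 ≤ θ x} := isClosed_le continuous_const hθc
  have hρS : ρ ∈ {x : ℝ | 0 ≤ θ x} := hSclosed.csInf_mem hSne hSbdd
  have hltρ : ∀ x, x < ρ → θ x < 0 := by
    intro x hx
    by_contra h
    exact absurd (csInf_le hSbdd (le_of_not_gt h : (0:ℝ) ≤ θ x)) (not_le.2 hx)
  have hθρ : θ ρ = 0 := by
    refine le_antisymm ?_ hρS
    have h1 : Tendsto θ (nhdsWithin ρ (Set.Iio ρ)) (nhds (θ ρ)) :=
      (hθc.tendsto ρ).mono_left nhdsWithin_le_nhds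
    refine le_of_tendsto h1 ?_
    filter_upwards [self_mem_nhdsWithin] with x hx
    exact (hltρ x hx).le
  have hneg : ∀ x, x ≤ ρ → θ x ≤ 0 := by
    intro x hx
    rcases lt_or_eq_of_le hx with h | h
    · exact (hltρ x h).le
    · rw [h, hθρ]
  -- facts about θt
  have hwint : ∀ a b : ℝ, IntervalIntegrable (fun x => |deriv θ x|) volume a b := fun a b =>
    (hwloc.integrableOn_isCompact isCompact_uIcc).intervalIntegrable
  have hwnn : ∀ a b : ℝ, a ≤ b → (0:ℝ) ≤ ∫ t in a..b, |deriv θ t| := fun a b hab =>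
    intervalIntegral.integral_nonneg hab (fun t _ => abs_nonneg _)
  have hθtρ : θt ρ = 0 := by rw [hθt]; simp [hθρ]
  have hθtabs : ∀ x, ρ ≤ x → θt x = |θ x| := by
    intro x hx
    rcases eq_or_lt_of_le hx with h | h
    · rw [hθt]; simp [← h, hθρ]
    · rw [hθt]; simp [not_le.2 h]
  have hθtle : ∀ x, x ≤ ρ → θt x = θ x := by intro x hx; rw [hθt]; simp [hx]
  have habs_t : ∀ a b : ℝ, a ≤ b → |θt b - θt a| ≤ ∫ t in a..b, |deriv θ t| := by
    intro a b hab
    rcases le_total b ρ with hbρ | hρb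
    · rw [hθtle a (hab.trans hbρ), hθtle b hbρ]
      exact habs a b hab
    · rcases le_total ρ a with hρa | haρ
      · rw [hθtabs a hρa, hθtabs b (hρa.trans hab)]
        exact (abs_abs_sub_abs_le_abs_sub _ _).trans (habs a b hab)
      · rw [hθtle a haρ, hθtabs b hρb]
        have h3 : |θ b| ≤ ∫ t in ρ..b, |deriv θ t| := by
          have := habs ρ b hρb
          rw [hθρ, sub_zero] at this
          exact this
        have h4 : |θ ρ - θ a| ≤ ∫ t in a..ρ, |deriv θ t| := habs a ρ haρ
        have h5 := intervalIntegral.integral_add_adjacent_intervals (hwint a ρ) (hwint ρ b)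
        have h6 : abs (abs (θ b) - θ a) ≤ abs (abs (θ b) - θ ρ) + |θ ρ - θ a| := abs_sub_le _ _ _
        have h8 : abs (abs (θ b) - θ ρ) = |θ b| := by rw [hθρ, sub_zero, abs_abs]
        have h7 : |θ ρ - θ a| = θ ρ - θ a := abs_of_nonneg (by rw [hθρ]; linarith [hneg a haρ])
        rw [h8, h7] at h6
        rw [h7] at h4
        linarith
  obtain ⟨kt, hktm, hktd, hktb, hktloc, hktFTC⟩ := acFTC hwm hw0 hwloc habs_t
  -- MemW θt
  have hktint : ∀ a b : ℝ, IntervalIntegrable kt volume a b := fun a b =>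
    (hktloc.integrableOn_isCompact isCompact_uIcc).intervalIntegrable
  have hθtc : Continuous θt := by
    have h1 : Continuous (fun y => θt 0 + ∫ t in (0:ℝ)..y, kt t) :=
      continuous_const.add (intervalIntegral.continuous_primitive hktint 0)
    have h2 : θt = fun y => θt 0 + ∫ t in (0:ℝ)..y, kt t := funext fun y => hktFTC 0 y
    rw [h2]; exact h1
  have hdθt : deriv θt =ᵐ[volume] kt := by
    filter_upwards [hktd] with x hx using hx.deriv
  have hcost : (fun x => Real.cos (θt x)) = fun x => Real.cos (θ x) := by
    funext x
    rcases le_total x ρ with h | h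
    · rw [hθtle x h]
    · rw [hθtabs x h, Real.cos_abs]
  have hw2 : MemLp (fun x => |deriv θ x|) 2 volume := by
    have := hg2.norm
    simpa [Real.norm_eq_abs] using this
  have hkt2 : MemLp kt 2 volume := by
    refine hw2.of_le hktm.aestronglyMeasurable ?_
    filter_upwards [hktb] with x hx
    simpa [Real.norm_eq_abs, abs_abs] using hx
  have hdt2 : MemLp (deriv θt) 2 volume := hkt2.ae_eq hdθt.symm
  have hFTCt : ∀ x y : ℝ, θt y = θt x + ∫ t in x..y, deriv θt t := by
    intro x y
    have h1 : ∫ t in x..y, deriv θt t = ∫ t in x..y, kt t := by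
      apply intervalIntegral.integral_congr_ae
      filter_upwards [hdθt] with t ht _ using ht
    rw [h1]; exact hktFTC x y
  have hbot_t : Tendsto θt atBot (nhds (-(π/2))) := by
    apply hbot.congr'
    filter_upwards [eventually_le_atBot ρ] with x hx using (hθtle x hx).symm
  have htop_t : Tendsto θt atTop (nhds (π/2)) := by
    have h1 : Tendsto (fun x => |θ x|) atTop (nhds |π/2|) := htop.abs
    rw [abs_of_pos (by positivity)] at h1
    apply h1.congr'
    filter_upwards [eventually_ge_atTop ρ] with x hx using (hθtabs x hx).symm
  have hrange_t : ∀ x : ℝ, θt x ∈ Set.Icc (-(π/2)) (π/2) := by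
    intro x
    rcases le_total x ρ with h | h
    · rw [hθtle x h]; exact hrange x
    · rw [hθtabs x h]
      constructor
      · exact le_trans (neg_nonpos.2 (by positivity)) (abs_nonneg _)
      · exact abs_le.2 ⟨(hrange x).1, (hrange x).2⟩
  have hMemWt : MemW θt := ⟨⟨hFTCt, hdt2, by rw [hcost]; exact hcos2⟩, hbot_t, htop_t, hrange_t⟩
  -- facts about θd
  have hθtnp : ∀ x, x ≤ ρ → θt x ≤ 0 := by
    intro x hx; rw [hθtle x hx]; exact hneg x hx
  have hθtnn : ∀ x, ρ ≤ x → 0 ≤ θt x := by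
    intro x hx; rw [hθtabs x hx]; exact abs_nonneg _
  have hθtlb : ∀ x, -(π/2) ≤ θt x := fun x => (hrange_t x).1
  have hθtub : ∀ x, θt x ≤ π/2 := fun x => (hrange_t x).2
  have hktaint : ∀ a b : ℝ, IntervalIntegrable (fun t => |kt t|) volume a b := fun a b =>
    (hktint a b).abs
  have hktann : ∀ a b : ℝ, a ≤ b → (0:ℝ) ≤ ∫ t in a..b, |kt t| := fun a b hab =>
    intervalIntegral.integral_nonneg hab (fun t _ => abs_nonneg _)
  have hIle : ∀ a t b : ℝ, a ≤ t → t ≤ b → (∫ u in t..b, |kt u|) ≤ ∫ u in a..b, |kt u| := by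
    intro a t b hat htb
    have h1 := intervalIntegral.integral_add_adjacent_intervals (hktaint a t) (hktaint t b)
    linarith [hktann a t hat]
  have hIle' : ∀ a t b : ℝ, a ≤ t → t ≤ b → (∫ u in a..t, |kt u|) ≤ ∫ u in a..b, |kt u| := by
    intro a t b hat htb
    have h1 := intervalIntegral.integral_add_adjacent_intervals (hktaint a t) (hktaint t b)
    linarith [hktann t b htb]
  have hstep : ∀ a b : ℝ, a ≤ b → θt b - θt a ≤ ∫ u in a..b, |kt u| := by
    intro a b hab
    have h1 : θt b - θt a = ∫ u in a..b, kt u := by have := hktFTC a b; linarith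
    rw [h1]
    exact (le_abs_self _).trans (intervalIntegral.abs_integral_le_integral_abs hab)
  have hne1 : ∀ x : ℝ, (θt '' Set.Ici x).Nonempty := fun x => ⟨θt x, x, le_refl x, rfl⟩
  have hne2 : ∀ x : ℝ, (θt '' Set.Iic x).Nonempty := fun x => ⟨θt x, x, le_refl x, rfl⟩
  have hbdd1 : ∀ x : ℝ, BddBelow (θt '' Set.Ici x) := by
    intro x
    refine ⟨-(π/2), ?_⟩
    rintro y ⟨t, -, rfl⟩
    exact hθtlb t
  have hbdd2 : ∀ x : ℝ, BddAbove (θt '' Set.Iic x) := by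
    intro x
    refine ⟨π/2, ?_⟩
    rintro y ⟨t, -, rfl⟩
    exact hθtub t
  have hθdle : ∀ x, x ≤ ρ → θd x = sInf (θt '' Set.Ici x) := by
    intro x hx; rw [hθd]; simp [hx]
  have hθdgt : ∀ x, ρ < x → θd x = sSup (θt '' Set.Iic x) := by
    intro x hx; rw [hθd]; simp [not_le.2 hx]
  have hd_le_t : ∀ x, x ≤ ρ → θd x ≤ θt x := by
    intro x hx
    rw [hθdle x hx]
    exact csInf_le (hbdd1 x) ⟨x, le_refl x, rfl⟩
  have hθdρ : θd ρ = 0 := by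
    rw [hθdle ρ le_rfl]
    refine le_antisymm (by simpa [hθtρ] using csInf_le (hbdd1 ρ) ⟨ρ, le_refl ρ, rfl⟩) ?_
    refine le_csInf (hne1 ρ) ?_
    rintro y ⟨t, ht, rfl⟩
    exact hθtnn t ht
  have ht_le_d : ∀ x, ρ ≤ x → θt x ≤ θd x := by
    intro x hx
    rcases eq_or_lt_of_le hx with h | h
    · rw [← h, hθdρ, hθtρ]
    · rw [hθdgt x h]
      exact le_csSup (hbdd2 x) ⟨x, le_refl x, rfl⟩
  have hd_np : ∀ x, x ≤ ρ → θd x ≤ 0 := fun x hx => (hd_le_t x hx).trans (hθtnp x hx)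
  have hd_nn : ∀ x, ρ ≤ x → 0 ≤ θd x := fun x hx => (hθtnn x hx).trans (ht_le_d x hx)
  have hd_lb : ∀ x, -(π/2) ≤ θd x := by
    intro x
    rcases le_total x ρ with h | h
    · rw [hθdle x h]
      refine le_csInf (hne1 x) ?_
      rintro y ⟨t, -, rfl⟩
      exact hθtlb t
    · exact (hθtlb x).trans (ht_le_d x h)
  have hd_ub : ∀ x, θd x ≤ π/2 := by
    intro x
    rcases le_total x ρ with h | h
    · exact (hd_le_t x h).trans (hθtub x)
    · rcases eq_or_lt_of_le h with h' | h'
      · rw [← h', hθdρ]; positivity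
      · rw [hθdgt x h']
        refine csSup_le (hne2 x) ?_
        rintro y ⟨t, -, rfl⟩
        exact hθtub t
  have hmono : Monotone θd := by
    intro x y hxy
    rcases le_total y ρ with hy | hy
    · rw [hθdle x (hxy.trans hy), hθdle y hy]
      exact csInf_le_csInf (hbdd1 x) (hne1 y) (Set.image_mono (f := θt) (Set.Ici_subset_Ici.2 hxy))
    · rcases le_total x ρ with hx | hx
      · exact (hd_np x hx).trans (hd_nn y hy)
      · rcases eq_or_lt_of_le hx with h' | h'
        · exact (le_of_eq (by rw [← h', hθdρ])).trans (hd_nn y hy)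
        · rw [hθdgt x h', hθdgt y (h'.trans_le hxy)]
          exact csSup_le_csSup (hbdd2 y) (hne2 x)
            (Set.image_mono (f := θt) (Set.Iic_subset_Iic.2 hxy))
  have stepA : ∀ a b : ℝ, a ≤ b → b ≤ ρ → θd b - θd a ≤ ∫ u in a..b, |kt u| := by
    intro a b hab hbρ
    refine le_of_forall_pos_le_add ?_
    intro ε hε
    have haρ := hab.trans hbρ
    have h1 : sInf (θt '' Set.Ici a) < θd a + ε := by
      rw [hθdle a haρ]; linarith
    obtain ⟨y, ⟨t, hta, rfl⟩, hyt⟩ := exists_lt_of_csInf_lt (hne1 a) h1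
    rcases le_total b t with hbt | htb
    · have h2 : θd b ≤ θt t := by
        rw [hθdle b hbρ]
        exact csInf_le (hbdd1 b) ⟨t, hbt, rfl⟩
      linarith [hktann a b hab]
    · have h2 : θd b ≤ θt b := hd_le_t b hbρ
      have h3 : θt b - θt t ≤ ∫ u in t..b, |kt u| := hstep t b htb
      have h4 := hIle a t b hta htb
      linarith
  have stepB : ∀ a b : ℝ, ρ ≤ a → a ≤ b → θd b - θd a ≤ ∫ u in a..b, |kt u| := by
    intro a b hρa hab
    rcases eq_or_lt_of_le (hρa.trans hab) with hρb | hρb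
    · have ha' : a = ρ := le_antisymm (hab.trans hρb.symm.le) hρa
      have hb' : b = ρ := hρb.symm
      rw [ha', hb', sub_self]
      exact hktann ρ ρ le_rfl
    · refine le_of_forall_pos_le_add ?_
      intro ε hε
      have h1 : θd b - ε < sSup (θt '' Set.Iic b) := by
        rw [hθdgt b hρb]; linarith
      obtain ⟨y, ⟨t, htb, rfl⟩, hyt⟩ := exists_lt_of_lt_csSup (hne2 b) h1
      have htda : ∀ u, u ≤ a → θt u ≤ θd a := by
        intro u hua
        rcases le_total u ρ with h | h
        · exact (hθtnp u h).trans (hd_nn a hρa)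
        · rcases eq_or_lt_of_le hρa with h' | h'
          · have : u = ρ := le_antisymm (hua.trans h'.symm.le) h
            rw [this, hθtρ, ← h', hθdρ]
          · rw [hθdgt a h']
            exact le_csSup (hbdd2 a) ⟨u, hua, rfl⟩
      rcases le_total t a with hta | hat
      · linarith [htda t hta, hktann a b hab]
      · have h2 : θt t - θt a ≤ ∫ u in a..t, |kt u| := hstep a t hat
        have h3 := hIle' a t b hat htb
        have h4 : θt a ≤ θd a := ht_le_d a hρa
        linarith
  have habs_d : ∀ a b : ℝ, a ≤ b → |θd b - θd a| ≤ ∫ t in a..b, |kt t| := by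
    intro a b hab
    rw [abs_of_nonneg (sub_nonneg.2 (hmono hab))]
    rcases le_total b ρ with hbρ | hρb
    · exact stepA a b hab hbρ
    · rcases le_total ρ a with hρa | haρ
      · exact stepB a b hρa hab
      · have h1 := stepA a ρ haρ (le_refl ρ)
        have h2 := stepB ρ b (le_refl ρ) hρb
        have h3 := intervalIntegral.integral_add_adjacent_intervals (hktaint a ρ) (hktaint ρ b)
        linarith
  obtain ⟨kd, hkdm, hkdd, hkdb, hkdloc, hkdFTC⟩ :=
    acFTC hktm.abs (fun x => abs_nonneg _) (by
      intro x
      rcases hktloc x with ⟨u, hu, hint⟩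
      exact ⟨u, hu, hint.abs⟩) habs_d
  -- MemW θd
  have hkdint : ∀ a b : ℝ, IntervalIntegrable kd volume a b := fun a b =>
    (hkdloc.integrableOn_isCompact isCompact_uIcc).intervalIntegrable
  have hθdc : Continuous θd := by
    have h1 : Continuous (fun y => θd 0 + ∫ t in (0:ℝ)..y, kd t) :=
      continuous_const.add (intervalIntegral.continuous_primitive hkdint 0)
    have h2 : θd = fun y => θd 0 + ∫ t in (0:ℝ)..y, kd t := funext fun y => hkdFTC 0 y
    rw [h2]; exact h1
  have hdθd : deriv θd =ᵐ[volume] kd := by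
    filter_upwards [hkdd] with x hx using hx.deriv
  have hkd2 : MemLp kd 2 volume := by
    refine hkt2.norm.of_le hkdm.aestronglyMeasurable ?_
    filter_upwards [hkdb] with x hx
    simpa [Real.norm_eq_abs, abs_abs] using hx
  have hdd2 : MemLp (deriv θd) 2 volume := hkd2.ae_eq hdθd.symm
  have hFTCd : ∀ x y : ℝ, θd y = θd x + ∫ t in x..y, deriv θd t := by
    intro x y
    have h1 : ∫ t in x..y, deriv θd t = ∫ t in x..y, kd t := by
      apply intervalIntegral.integral_congr_ae
      filter_upwards [hdθd] with t ht _ using ht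
    rw [h1]; exact hkdFTC x y
  have hbot_d : Tendsto θd atBot (nhds (-(π/2))) := by
    refine tendsto_of_tendsto_of_tendsto_of_le_of_le' tendsto_const_nhds hbot_t ?_ ?_
    · filter_upwards with x using hd_lb x
    · filter_upwards [eventually_le_atBot ρ] with x hx using hd_le_t x hx
  have htop_d : Tendsto θd atTop (nhds (π/2)) := by
    refine tendsto_of_tendsto_of_tendsto_of_le_of_le' htop_t tendsto_const_nhds ?_ ?_
    · filter_upwards [eventually_ge_atTop ρ] with x hx using ht_le_d x hx
    · filter_upwards with x using hd_ub x
  have hcosle : ∀ x, |Real.cos (θd x)| ≤ |Real.cos (θt x)| := by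
    intro x
    have habsle : |θt x| ≤ |θd x| := by
      rcases le_total x ρ with h | h
      · rw [abs_of_nonpos (hθtnp x h), abs_of_nonpos ((hd_le_t x h).trans (hθtnp x h))]
        have := hd_le_t x h
        linarith
      · rw [abs_of_nonneg (hθtnn x h), abs_of_nonneg ((hθtnn x h).trans (ht_le_d x h))]
        exact ht_le_d x h
    have h1 : |Real.cos (θd x)| = Real.cos |θd x| := by
      rw [Real.cos_abs, abs_of_nonneg (Real.cos_nonneg_of_mem_Icc ⟨hd_lb x, hd_ub x⟩)]
    have h2 : |Real.cos (θt x)| = Real.cos |θt x| := by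
      rw [Real.cos_abs, abs_of_nonneg (Real.cos_nonneg_of_mem_Icc ⟨hθtlb x, hθtub x⟩)]
    rw [h1, h2]
    refine Real.cos_le_cos_of_nonneg_of_le_pi (abs_nonneg _) ?_ habsle
    have : |θd x| ≤ π/2 := abs_le.2 ⟨hd_lb x, hd_ub x⟩
    linarith [pi_pos]
  have hcosd2 : MemLp (fun x => Real.cos (θd x)) 2 volume := by
    have hcost2 : MemLp (fun x => Real.cos (θt x)) 2 volume := by rw [hcost]; exact hcos2
    refine hcost2.of_le (Real.continuous_cos.comp hθdc).aestronglyMeasurable ?_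
    filter_upwards with x
    simpa [Real.norm_eq_abs] using hcosle x
  have hMemWd : MemW θd := ⟨⟨hFTCd, hdd2, hcosd2⟩, hbot_d, htop_d,
    fun x => ⟨hd_lb x, hd_ub x⟩⟩
  -- energy comparison
  obtain ⟨⟨K, hlip⟩, hs₀le, hsle1, -⟩ := hnotch
  have hsm : Measurable s := hlip.continuous.measurable
  have hs0 : ∀ x, 0 ≤ s x := fun x => hs₀.le.trans (hs₀le x)
  have hIθ : Integrable (fun x => ((deriv θ x)^2 + (Real.cos (θ x))^2) * s x) volume := by
    have hbase : Integrable (fun x => (deriv θ x)^2 + (Real.cos (θ x))^2) volume :=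
      hg2.integrable_sq.add hcos2.integrable_sq
    have h1 : (fun x => ((deriv θ x)^2 + (Real.cos (θ x))^2) * s x)
        = fun x => s x * ((deriv θ x)^2 + (Real.cos (θ x))^2) := funext fun x => mul_comm _ _
    rw [h1]
    refine hbase.bdd_mul hsm.aestronglyMeasurable (c := 1) (ae_of_all _ fun x => ?_)
    rw [Real.norm_eq_abs, abs_of_nonneg (hs0 x)]
    exact hsle1 x
  have hEt := energy_le s θt θ hsm hs0 hθtc.measurable hIθ (by
      filter_upwards [hdθt, hktb] with x hx1 hx2
      rw [hx1]
      calc (kt x)^2 = |kt x|^2 := (sq_abs _).symm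
        _ ≤ |deriv θ x|^2 := pow_le_pow_left₀ (abs_nonneg _) hx2 2
        _ = (deriv θ x)^2 := sq_abs _)
    (fun x => le_of_eq (by rw [congrFun hcost x]))
  have hEd := energy_le s θd θt hsm hs0 hθdc.measurable hEt.1 (by
      filter_upwards [hdθd, hkdb, hdθt] with x hx1 hx2 hx3
      rw [hx1, hx3]
      calc (kd x)^2 = |kd x|^2 := (sq_abs _).symm
        _ ≤ |kt x|^2 := pow_le_pow_left₀ (abs_nonneg _) hx2 2
        _ = (kt x)^2 := sq_abs _)
    hcosle
  exact ⟨hMemWt, hMemWd, hmono, hEd.2, hEt.2⟩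
end
end

section
/- Let s be a unimodal notch profile with s ≢ 1 and let θ*(x) = arctan(sinh x). Then the map γ ↦ θ*(· − γ) ∈ W is continuous with respect to the H¹ topology; for every γ* > 0 one has max_{γ ∈ [−γ*, γ*]} E_s(θ*(· − γ)) < E₁(θ*); and E_s(θ*(· − γ)) → E₁(θ*) as γ → ±∞. -/
open MeasureTheory Real Filter

noncomputable section

/-- A unimodal notch. -/
def Unimodal (a : ℝ) (s : ℝ → ℝ) : Prop :=
  AntitoneOn s (Set.Icc (-a) 0) ∧ MonotoneOn s (Set.Icc 0 a)

/-- The notchless domain-wall profile `θ*(x) = arctan (sinh x)`. -/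
def thetaStar (x : ℝ) : ℝ := Real.arctan (Real.sinh x)

/-- Squared `H¹(ℝ)` norm. -/
def H1normSq (f : ℝ → ℝ) : ℝ :=
  (∫ x : ℝ, (f x)^2) + ∫ x : ℝ, (deriv f x)^2

/-- `H¹(ℝ)` norm. -/
def H1norm (f : ℝ → ℝ) : ℝ := Real.sqrt (H1normSq f)

namespace TWE

def sech (x : ℝ) : ℝ := (Real.cosh x)⁻¹

lemma sech_pos (x : ℝ) : 0 < sech x := inv_pos.2 (Real.cosh_pos x)

lemma sech_le_one (x : ℝ) : sech x ≤ 1 := by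
  rw [sech]
  exact inv_le_one_of_one_le₀ (Real.one_le_cosh x)

lemma continuous_sech : Continuous sech :=
  Real.continuous_cosh.inv₀ fun x => (Real.cosh_pos x).ne'

lemma continuous_thetaStar : Continuous thetaStar :=
  Real.continuous_arctan.comp Real.continuous_sinh

lemma hasDerivAt_thetaStar (x : ℝ) : HasDerivAt thetaStar (sech x) x := by
  have h : HasDerivAt (Real.arctan ∘ Real.sinh) (1 / (1 + Real.sinh x ^ 2) * Real.cosh x) x :=
    (Real.hasDerivAt_arctan (Real.sinh x)).comp x (Real.hasDerivAt_sinh x)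
  convert h using 1
  · rfl
  have hc := Real.cosh_pos x
  rw [sech]
  rw [show (1 : ℝ) + Real.sinh x ^ 2 = Real.cosh x ^ 2 by
    rw [Real.cosh_sq]; ring]
  field_simp

lemma cos_thetaStar (x : ℝ) : Real.cos (thetaStar x) = sech x := by
  rw [thetaStar, Real.cos_arctan, sech,
    show (1 : ℝ) + Real.sinh x ^ 2 = Real.cosh x ^ 2 by rw [Real.cosh_sq]; ring,
    Real.sqrt_sq (Real.cosh_pos x).le, one_div]

lemma tendsto_sinh_atTop : Tendsto Real.sinh atTop atTop := by
  have hmin : Tendsto (fun x : ℝ => (Real.exp x + -1)/2) atTop atTop :=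
    (Real.tendsto_exp_atTop.atTop_add tendsto_const_nhds).atTop_div_const two_pos
  refine tendsto_atTop_mono' atTop ?_ hmin
  filter_upwards [eventually_ge_atTop (0:ℝ)] with x hx
  rw [Real.sinh_eq]
  have h1 : Real.exp (-x) ≤ 1 := Real.exp_le_one_iff.2 (by linarith)
  have : (Real.exp x - Real.exp (-x)) / 2 ≥ (Real.exp x + -1)/2 := by linarith
  linarith

lemma tendsto_thetaStar_atTop : Tendsto thetaStar atTop (nhds (π/2)) :=
  (Real.tendsto_arctan_atTop.mono_right nhdsWithin_le_nhds).comp tendsto_sinh_atTop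

lemma tendsto_thetaStar_atBot : Tendsto thetaStar atBot (nhds (-(π/2))) := by
  have h := ((tendsto_thetaStar_atTop.comp tendsto_neg_atBot_atTop)).neg
  show Tendsto (fun x => Real.arctan (Real.sinh x)) atBot (nhds (-(π/2)))
  simpa [Function.comp, thetaStar, Real.sinh_neg, Real.arctan_neg] using h


lemma integrableOn_sech_Ioi : IntegrableOn sech (Set.Ioi 0) volume :=
  integrableOn_Ioi_deriv_of_nonneg' (fun x _ => hasDerivAt_thetaStar x)
    (fun x _ => (sech_pos x).le) tendsto_thetaStar_atTop

lemma sech_neg (x : ℝ) : sech (-x) = sech x := by rw [sech, sech, Real.cosh_neg]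

lemma integrable_sech : Integrable sech := by
  have h1 : IntegrableOn sech (Set.Ici (0:ℝ)) volume :=
    (integrableOn_Ici_iff_integrableOn_Ioi).2 integrableOn_sech_Ioi
  have h2 : IntegrableOn sech (Set.Iio (0:ℝ)) volume := by
    have h3 : IntegrableOn (sech ∘ (fun x => -x)) ((fun x : ℝ => -x) ⁻¹' (Set.Ioi 0)) volume :=
      (MeasurePreserving.integrableOn_comp_preimage (Measure.measurePreserving_neg _)
        (Homeomorph.neg ℝ).measurableEmbedding).2 integrableOn_sech_Ioi
    have : ((fun x : ℝ => -x) ⁻¹' (Set.Ioi 0)) = Set.Iio 0 := by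
      ext x; simp
    rw [this] at h3
    refine h3.congr_fun (fun x _ => sech_neg x) measurableSet_Iio
  rw [← integrableOn_univ, ← Set.Iio_union_Ici (a := (0:ℝ))]
  exact h2.union h1

lemma integrable_sech_sq : Integrable (fun x => sech x ^ 2) := by
  refine integrable_sech.mono' ((continuous_sech.pow 2).aestronglyMeasurable) ?_
  filter_upwards with x
  rw [Real.norm_eq_abs, abs_of_nonneg (by positivity)]
  calc sech x ^ 2 ≤ sech x * 1 := by
        rw [pow_two]; exact mul_le_mul_of_nonneg_left (sech_le_one x) (sech_pos x).le
    _ = sech x := mul_one _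

lemma integrable_sech_shift (γ : ℝ) : Integrable (fun x => sech (x - γ)) :=
  integrable_sech.comp_sub_right γ

lemma integrable_sech_sq_shift (γ : ℝ) : Integrable (fun x => sech (x - γ) ^ 2) :=
  integrable_sech_sq.comp_sub_right γ

lemma sech_anti {u v : ℝ} (h : |u| ≤ |v|) : sech v ≤ sech u := by
  rw [sech, sech]
  exact inv_anti₀ (Real.cosh_pos u) (Real.cosh_le_cosh.2 h)

lemma abs_sinh_le_cosh (u : ℝ) : |Real.sinh u| ≤ Real.cosh u := by
  rw [Real.abs_sinh, ← Real.cosh_abs]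
  exact (Real.sinh_lt_cosh _).le

lemma sech_neighbor {u v : ℝ} (h : |u - v| ≤ 1) : sech u ≤ Real.exp 1 * sech v := by
  have hvu : |v - u| ≤ 1 := by rwa [abs_sub_comm]
  have hc : Real.cosh v ≤ Real.exp 1 * Real.cosh u := by
    have h2 : Real.cosh (u + (v-u)) = Real.cosh u * Real.cosh (v-u) + Real.sinh u * Real.sinh (v-u) :=
      Real.cosh_add u (v-u)
    have h3 : Real.sinh u * Real.sinh (v-u) ≤ Real.cosh u * |Real.sinh (v-u)| := by
      calc Real.sinh u * Real.sinh (v-u) ≤ |Real.sinh u * Real.sinh (v-u)| := le_abs_self _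
        _ = |Real.sinh u| * |Real.sinh (v-u)| := abs_mul _ _
        _ ≤ Real.cosh u * |Real.sinh (v-u)| :=
            mul_le_mul_of_nonneg_right (abs_sinh_le_cosh u) (abs_nonneg _)
    have h4 : |Real.sinh (v-u)| ≤ Real.sinh 1 := by
      rw [Real.abs_sinh]
      exact Real.sinh_le_sinh.2 hvu
    have h5 : Real.cosh (v-u) ≤ Real.cosh 1 := by
      rw [← Real.cosh_abs]
      refine Real.cosh_le_cosh.2 ?_
      rw [abs_abs, abs_one]; exact hvu
    have h6 := Real.cosh_add_sinh 1
    have h7 : Real.cosh v = Real.cosh (u + (v-u)) := by ring_nf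
    nlinarith [Real.cosh_pos u]
  rw [sech, sech, ← div_eq_mul_inv, le_div_iff₀ (Real.cosh_pos v)]
  rw [inv_mul_eq_div, div_le_iff₀ (Real.cosh_pos u)]
  linarith


lemma hasDerivAt_shift (γ x : ℝ) :
    HasDerivAt (fun x => thetaStar (x - γ)) (sech (x - γ)) x := by
  have h := (hasDerivAt_thetaStar (x - γ)).comp x ((hasDerivAt_id x).sub_const γ)
  simpa [Function.comp_def] using h

lemma deriv_shift (γ : ℝ) :
    deriv (fun x => thetaStar (x - γ)) = fun x => sech (x - γ) :=
  funext fun x => (hasDerivAt_shift γ x).deriv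

lemma hasDerivAt_sech (x : ℝ) :
    HasDerivAt sech (-(Real.sinh x / Real.cosh x ^ 2)) x := by
  have := (Real.hasDerivAt_cosh x).inv (Real.cosh_pos x).ne'
  rw [neg_div] at this
  exact this

lemma sech_deriv_bound (x : ℝ) : ‖-(Real.sinh x / Real.cosh x ^ 2)‖ ≤ 1 := by
  rw [norm_neg, Real.norm_eq_abs, abs_div, abs_of_nonneg (by positivity : (0:ℝ) ≤ Real.cosh x ^ 2)]
  rw [div_le_one (by positivity)]
  calc |Real.sinh x| ≤ Real.cosh x := abs_sinh_le_cosh x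
    _ ≤ Real.cosh x * Real.cosh x := le_mul_of_one_le_left (Real.cosh_pos x).le (Real.one_le_cosh x)
    _ = Real.cosh x ^ 2 := (sq (Real.cosh x)).symm

lemma sech_lipschitz (u v : ℝ) : |sech u - sech v| ≤ |u - v| := by
  have := Convex.norm_image_sub_le_of_norm_hasDerivWithin_le
    (f := sech) (f' := fun t => -(Real.sinh t / Real.cosh t ^ 2)) (C := 1) (s := Set.univ)
    (fun t _ => (hasDerivAt_sech t).hasDerivWithinAt)
    (fun t _ => sech_deriv_bound t) convex_univ (Set.mem_univ v) (Set.mem_univ u)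
  simpa using this

lemma theta_diff_bound {u v : ℝ} (h : |u - v| ≤ 1) :
    |thetaStar u - thetaStar v| ≤ Real.exp 1 * sech v * |u - v| := by
  have hball : ∀ t ∈ Metric.closedBall v 1, ‖sech t‖ ≤ Real.exp 1 * sech v := by
    intro t ht
    rw [Metric.mem_closedBall, Real.dist_eq] at ht
    rw [Real.norm_eq_abs, abs_of_nonneg (sech_pos t).le]
    exact sech_neighbor ht
  have hu : u ∈ Metric.closedBall v 1 := by
    rw [Metric.mem_closedBall, Real.dist_eq]; exact h
  have hv : v ∈ Metric.closedBall v 1 := Metric.mem_closedBall_self zero_le_one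
  have := Convex.norm_image_sub_le_of_norm_hasDerivWithin_le
    (f := thetaStar) (f' := sech) (C := Real.exp 1 * sech v) (s := Metric.closedBall v 1)
    (fun t _ => (hasDerivAt_thetaStar t).hasDerivWithinAt)
    hball (convex_closedBall v 1) hv hu
  simpa using this

lemma tendsto_cosh_atTop : Tendsto Real.cosh atTop atTop := by
  have hmin : Tendsto (fun x : ℝ => Real.exp x / 2) atTop atTop :=
    Real.tendsto_exp_atTop.atTop_div_const two_pos
  refine tendsto_atTop_mono' atTop ?_ hmin
  filter_upwards with x
  rw [Real.cosh_eq]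
  have := (Real.exp_pos (-x)).le
  linarith

lemma tendsto_sech_sq_zero : Tendsto (fun x => sech x ^ 2) atTop (nhds 0) := by
  have h : Tendsto sech atTop (nhds 0) :=
    Tendsto.inv_tendsto_atTop tendsto_cosh_atTop
  have := h.mul h
  rw [mul_zero] at this
  refine this.congr fun x => (sq (sech x)).symm


lemma continuous_sech_shift (γ : ℝ) : Continuous fun x : ℝ => sech (x - γ) :=
  continuous_sech.comp (continuous_id.sub continuous_const)

lemma integrable_weighted (w : ℝ → ℝ) (hc : Continuous w) (h0 : ∀ x, 0 ≤ w x)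
    (h1 : ∀ x, w x ≤ 1) (γ : ℝ) : Integrable (fun x => sech (x - γ)^2 * w x) := by
  refine (integrable_sech_sq_shift γ).mono'
    ((((continuous_sech_shift γ).pow 2).mul hc).aestronglyMeasurable) ?_
  filter_upwards with x
  rw [Real.norm_eq_abs, abs_mul, abs_of_nonneg (by positivity : (0:ℝ) ≤ sech (x-γ)^2),
    abs_of_nonneg (h0 x)]
  exact mul_le_of_le_one_right (by positivity) (h1 x)

lemma Es_one : Es (fun _ => 1) thetaStar = ∫ x : ℝ, sech x ^ 2 := by
  unfold Es
  have hd : deriv thetaStar = sech := funext fun x => (hasDerivAt_thetaStar x).deriv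
  rw [hd]
  have h2 : (fun x => ((sech x)^2 + (Real.cos (thetaStar x))^2) * (1:ℝ))
      = fun x => 2 * sech x ^ 2 := funext fun x => by rw [cos_thetaStar]; ring
  rw [h2, integral_const_mul]; ring

lemma Es_shift (s : ℝ → ℝ) (γ : ℝ) :
    Es s (fun x => thetaStar (x - γ)) = ∫ x : ℝ, sech (x - γ)^2 * s x := by
  unfold Es
  rw [deriv_shift]
  have h2 : (fun x => ((sech (x - γ))^2 + (Real.cos (thetaStar (x - γ)))^2) * s x)
      = fun x => 2 * (sech (x - γ)^2 * s x) := funext fun x => by rw [cos_thetaStar]; ring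
  rw [h2, integral_const_mul]; ring

lemma Es_decomp (s : ℝ → ℝ) (hc : Continuous s) (h0 : ∀ x, 0 ≤ s x) (h1 : ∀ x, s x ≤ 1)
    (γ : ℝ) :
    Es s (fun x => thetaStar (x - γ))
      = (∫ x : ℝ, sech x ^ 2) - ∫ x : ℝ, sech (x - γ)^2 * (1 - s x) := by
  rw [Es_shift]
  have hw : Integrable (fun x => sech (x - γ)^2 * (1 - s x)) :=
    integrable_weighted (fun x => 1 - s x) (continuous_const.sub hc)
      (fun x => by show (0:ℝ) ≤ 1 - s x; linarith [h1 x])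
      (fun x => by show 1 - s x ≤ 1; linarith [h0 x]) γ
  have h2 : ∫ x : ℝ, sech (x - γ)^2 * (1 - s x)
      = (∫ x : ℝ, sech (x - γ)^2) - ∫ x : ℝ, sech (x - γ)^2 * s x := by
    rw [← integral_sub (integrable_sech_sq_shift γ) (integrable_weighted s hc h0 h1 γ)]
    congr 1; funext x; ring
  have h3 : ∫ x : ℝ, sech (x - γ)^2 = ∫ x : ℝ, sech x ^ 2 :=
    integral_sub_right_eq_self (fun x => sech x ^ 2) γ
  rw [h2, h3]; ring

lemma pos_part (s : ℝ → ℝ) (K : NNReal) (hK : LipschitzWith K s)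
    (h0 : ∀ x, 0 ≤ s x) (h1 : ∀ x, s x ≤ 1) (x₀ : ℝ) (hx₀ : s x₀ < 1) (γ : ℝ) :
    0 < ∫ x : ℝ, sech (x - γ)^2 * (1 - s x) := by
  have hc : Continuous s := hK.continuous
  set η : ℝ := (1 - s x₀)/2 with hηdef
  have hηpos : 0 < η := by rw [hηdef]; linarith
  set δ : ℝ := η / (K + 1) with hδdef
  have hKpos : (0:ℝ) < (K:ℝ) + 1 := by positivity
  have hδpos : 0 < δ := div_pos hηpos hKpos
  have hKd : (K:ℝ) * δ ≤ η := by
    rw [hδdef, mul_div_assoc']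
    rw [div_le_iff₀ hKpos]
    nlinarith [K.coe_nonneg]
  have hlow : ∀ x ∈ Set.Icc (x₀ - δ) (x₀ + δ), η ≤ 1 - s x := by
    intro x hx
    have hd : |x - x₀| ≤ δ := by
      rw [abs_le]; exact ⟨by linarith [hx.1], by linarith [hx.2]⟩
    have hdist := hK.dist_le_mul x x₀
    rw [Real.dist_eq, Real.dist_eq] at hdist
    have h5 : s x - s x₀ ≤ η := by
      have := le_abs_self (s x - s x₀)
      have := mul_le_mul_of_nonneg_left hd (K.coe_nonneg)
      linarith
    rw [hηdef] at *; linarith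
  set M : ℝ := |x₀| + δ + |γ| with hMdef
  have hM0 : 0 ≤ M := by positivity
  set c : ℝ := sech M ^ 2 * η with hcdef
  have hcpos : 0 < c := mul_pos (pow_pos (sech_pos M) 2) hηpos
  have hIcc : ∀ x ∈ Set.Icc (x₀ - δ) (x₀ + δ), c ≤ sech (x - γ)^2 * (1 - s x) := by
    intro x hx
    have hxb : |x| ≤ |x₀| + δ := by
      have : |x - x₀| ≤ δ := by
        rw [abs_le]; exact ⟨by linarith [hx.1], by linarith [hx.2]⟩
      calc |x| = |x₀ + (x - x₀)| := by ring_nf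
        _ ≤ |x₀| + |x - x₀| := abs_add_le _ _
        _ ≤ |x₀| + δ := by linarith
    have hxγ : |x - γ| ≤ |M| := by
      rw [abs_of_nonneg hM0, hMdef]
      calc |x - γ| ≤ |x| + |γ| := abs_sub _ _
        _ ≤ |x₀| + δ + |γ| := by linarith
    have hs2 : sech M ≤ sech (x - γ) := sech_anti hxγ
    have := hlow x hx
    calc c = sech M ^ 2 * η := hcdef
      _ ≤ sech (x - γ)^2 * (1 - s x) := by
        apply mul_le_mul _ this hηpos.le (by positivity)
        exact pow_le_pow_left₀ (sech_pos M).le hs2 2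
  have hint : Integrable (fun x => sech (x - γ)^2 * (1 - s x)) :=
    integrable_weighted (fun x => 1 - s x) (continuous_const.sub hc)
      (fun x => by show (0:ℝ) ≤ 1 - s x; linarith [h1 x])
      (fun x => by show 1 - s x ≤ 1; linarith [h0 x]) γ
  have hvol : (volume (Set.Icc (x₀ - δ) (x₀ + δ))).toReal = 2 * δ := by
    rw [Real.volume_Icc, ENNReal.toReal_ofReal (by linarith)]; ring
  have hset : c * (2*δ) ≤ ∫ x in Set.Icc (x₀ - δ) (x₀ + δ), sech (x - γ)^2 * (1 - s x) := by
    have := setIntegral_ge_of_const_le_real (measurableSet_Icc)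
      (by rw [Real.volume_Icc]; exact ENNReal.ofReal_ne_top) hIcc hint.integrableOn
    rwa [measureReal_def, hvol] at this
  have hmono : (∫ x in Set.Icc (x₀ - δ) (x₀ + δ), sech (x - γ)^2 * (1 - s x))
      ≤ ∫ x : ℝ, sech (x - γ)^2 * (1 - s x) := by
    apply setIntegral_le_integral hint
    filter_upwards with x
    exact mul_nonneg (by positivity) (by linarith [h1 x])
  have : 0 < c * (2*δ) := by positivity
  linarith

lemma G_le (s : ℝ → ℝ) (h0 : ∀ x, 0 ≤ s x) (h1 : ∀ x, s x ≤ 1)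
    (b : ℝ) (hb : 0 ≤ b) (hsupp : ∀ x : ℝ, b ≤ |x| → s x = 1) (γ : ℝ) (hγ : b ≤ |γ|) :
    |∫ x : ℝ, sech (x - γ)^2 * (1 - s x)| ≤ sech (|γ| - b)^2 * (2*b) := by
  have hres : ∫ x : ℝ, sech (x - γ)^2 * (1 - s x)
      = ∫ x in Set.Icc (-b) b, sech (x - γ)^2 * (1 - s x) := by
    symm
    apply setIntegral_eq_integral_of_forall_compl_eq_zero
    intro x hx
    have hbx : b ≤ |x| := by
      by_contra hlt
      push_neg at hlt
      exact hx ⟨by linarith [neg_abs_le x], by linarith [le_abs_self x]⟩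
    rw [hsupp x hbx, sub_self, mul_zero]
  rw [hres, ← Real.norm_eq_abs]
  have hbound : ∀ x ∈ Set.Icc (-b) b, ‖sech (x - γ)^2 * (1 - s x)‖ ≤ sech (|γ| - b)^2 := by
    intro x hx
    rw [Set.mem_Icc] at hx
    have hxa : |x| ≤ b := abs_le.2 hx
    have hd : |(|γ| - b)| ≤ |x - γ| := by
      rw [abs_of_nonneg (by linarith : (0:ℝ) ≤ |γ| - b)]
      have := abs_sub_abs_le_abs_sub γ x
      rw [abs_sub_comm γ x] at this
      linarith
    have hss : sech (x - γ) ≤ sech (|γ| - b) := sech_anti hd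
    rw [Real.norm_eq_abs, abs_mul, abs_of_nonneg (by positivity : (0:ℝ) ≤ sech (x-γ)^2)]
    have habs1 : |1 - s x| ≤ 1 := by
      rw [abs_le]; exact ⟨by linarith [h1 x], by linarith [h0 x]⟩
    calc sech (x - γ)^2 * |1 - s x| ≤ sech (x - γ)^2 * 1 :=
          mul_le_mul_of_nonneg_left habs1 (by positivity)
      _ = sech (x - γ)^2 := mul_one _
      _ ≤ sech (|γ| - b)^2 := pow_le_pow_left₀ (sech_pos _).le hss 2
  have hvol : (volume (Set.Icc (-b) b)).toReal = 2*b := by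
    rw [Real.volume_Icc, ENNReal.toReal_ofReal (by linarith)]; ring
  have := norm_setIntegral_le_of_norm_le_const
    (by rw [Real.volume_Icc]; exact ENNReal.ofReal_lt_top) hbound
  rwa [measureReal_def, hvol] at this

end TWE

/-- properties of the translated notchless domain wall
`γ ↦ θ*(· - γ)`. -/
theorem translated_wall_energy (s₀ a : ℝ) (s : ℝ → ℝ)
    (hs₀ : 0 < s₀) (hs₀1 : s₀ < 1) (ha : 0 < a)
    (hnotch : NotchProfile s₀ a s) (huni : Unimodal a s)
    (hne : ∃ x, s x ≠ 1) :
    (∀ γ : ℝ, MemW (fun x => thetaStar (x - γ))) ∧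
    (∀ γ : ℝ, ∀ ε > (0:ℝ), ∃ δ > (0:ℝ), ∀ γ' : ℝ, |γ' - γ| < δ →
      H1normSq (fun x => thetaStar (x - γ') - thetaStar (x - γ)) < ε) ∧
    (∀ γstar > (0:ℝ), ∀ γ ∈ Set.Icc (-γstar) γstar,
      Es s (fun x => thetaStar (x - γ)) < Es (fun _ => 1) thetaStar) ∧
    Tendsto (fun γ : ℝ => Es s (fun x => thetaStar (x - γ))) atTop
      (nhds (Es (fun _ => 1) thetaStar)) ∧
    Tendsto (fun γ : ℝ => Es s (fun x => thetaStar (x - γ))) atBot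
      (nhds (Es (fun _ => 1) thetaStar)) := by
  obtain ⟨⟨K, hK⟩, hs₀le, hsle1, hsupp⟩ := hnotch
  have hs0 : ∀ x, 0 ≤ s x := fun x => le_trans hs₀.le (hs₀le x)
  have hc : Continuous s := hK.continuous
  obtain ⟨x₀, hx₀⟩ := hne
  have hx₀lt : s x₀ < 1 := lt_of_le_of_ne (hsle1 x₀) hx₀
  refine ⟨?_, ?_, ?_, ?_, ?_⟩
  · -- Part 1 : MemW
    intro γ
    refine ⟨⟨?_, ?_, ?_⟩, ?_, ?_, ?_⟩
    · intro x y
      rw [TWE.deriv_shift]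
      rw [intervalIntegral.integral_eq_sub_of_hasDerivAt (fun t _ => TWE.hasDerivAt_shift γ t)
        ((TWE.continuous_sech_shift γ).intervalIntegrable x y)]
      ring
    · rw [TWE.deriv_shift]
      exact (memLp_two_iff_integrable_sq
        (TWE.continuous_sech_shift γ).aestronglyMeasurable).2 (TWE.integrable_sech_sq_shift γ)
    · have hcos : (fun x => Real.cos ((fun x => thetaStar (x - γ)) x)) = fun x => TWE.sech (x - γ) :=
        funext fun x => TWE.cos_thetaStar _
      rw [hcos]
      exact (memLp_two_iff_integrable_sq
        (TWE.continuous_sech_shift γ).aestronglyMeasurable).2 (TWE.integrable_sech_sq_shift γ)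
    · have h := TWE.tendsto_thetaStar_atBot.comp
        (tendsto_atBot_add_const_right atBot (-γ) tendsto_id)
      simpa [Function.comp_def, sub_eq_add_neg] using h
    · have h := TWE.tendsto_thetaStar_atTop.comp
        (tendsto_atTop_add_const_right atTop (-γ) tendsto_id)
      simpa [Function.comp_def, sub_eq_add_neg] using h
    · intro x
      simp only [Set.mem_Icc, thetaStar]
      exact ⟨(Real.neg_pi_div_two_lt_arctan _).le, (Real.arctan_lt_pi_div_two _).le⟩
  · -- Part 2 : H¹ continuity
    intro γ ε hε
    set C₁ : ℝ := ∫ x : ℝ, TWE.sech x with hC₁def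
    set C₂ : ℝ := ∫ x : ℝ, TWE.sech x ^ 2 with hC₂def
    have hC₁0 : 0 ≤ C₁ := integral_nonneg fun x => (TWE.sech_pos x).le
    have hC₂0 : 0 ≤ C₂ := integral_nonneg fun x => by positivity
    set e : ℝ := Real.exp 1 with hedef
    have he1 : 1 ≤ e := Real.one_le_exp zero_le_one
    set D : ℝ := e^2 * C₂ + 2*e*C₁ + 1 with hDdef
    have hDpos : 0 < D := by positivity
    refine ⟨min 1 (ε / D), lt_min one_pos (div_pos hε hDpos), ?_⟩
    intro γ' hγ'
    have hd1 : |γ' - γ| < 1 := lt_of_lt_of_le hγ' (min_le_left _ _)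
    have hdD : |γ' - γ| < ε / D := lt_of_lt_of_le hγ' (min_le_right _ _)
    set d : ℝ := |γ' - γ| with hddef
    have hd0 : 0 ≤ d := abs_nonneg _
    have harg : ∀ x : ℝ, (x - γ') - (x - γ) = -(γ' - γ) := fun x => by ring
    have hargd : ∀ x : ℝ, |(x - γ') - (x - γ)| = d := fun x => by
      rw [harg x, abs_neg]
    have hderiv : deriv (fun x => thetaStar (x - γ') - thetaStar (x - γ))
        = fun x => TWE.sech (x - γ') - TWE.sech (x - γ) :=
      funext fun x => ((TWE.hasDerivAt_shift γ' x).sub (TWE.hasDerivAt_shift γ x)).deriv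
    have hptA : ∀ x : ℝ, (thetaStar (x - γ') - thetaStar (x - γ))^2
        ≤ d * (e^2 * TWE.sech (x - γ)^2) := by
      intro x
      have hb := TWE.theta_diff_bound (u := x - γ') (v := x - γ) (by rw [hargd x]; exact hd1.le)
      rw [hargd x] at hb
      have h1 : (thetaStar (x - γ') - thetaStar (x - γ))^2
          = |thetaStar (x - γ') - thetaStar (x - γ)|^2 := (sq_abs _).symm
      rw [h1]
      have h2 : |thetaStar (x - γ') - thetaStar (x - γ)|^2 ≤ (e * TWE.sech (x - γ) * d)^2 :=
        pow_le_pow_left₀ (abs_nonneg _) hb 2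
      have h3 : (e * TWE.sech (x - γ) * d)^2 = d^2 * (e^2 * TWE.sech (x - γ)^2) := by ring
      have h4 : d^2 ≤ d := by nlinarith
      nlinarith [sq_nonneg (e * TWE.sech (x - γ))]
    have hptB : ∀ x : ℝ, (TWE.sech (x - γ') - TWE.sech (x - γ))^2
        ≤ d * (2*e*TWE.sech (x - γ)) := by
      intro x
      have hlip := TWE.sech_lipschitz (x - γ') (x - γ)
      rw [hargd x] at hlip
      have hexp : |TWE.sech (x - γ') - TWE.sech (x - γ)| ≤ 2*e*TWE.sech (x - γ) := by
        have h1 : TWE.sech (x - γ') ≤ e * TWE.sech (x - γ) :=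
          TWE.sech_neighbor (by rw [hargd x]; exact hd1.le)
        have h2 : TWE.sech (x - γ) ≤ e * TWE.sech (x - γ) :=
          le_mul_of_one_le_left (TWE.sech_pos _).le he1
        have h3 := abs_sub_abs_le_abs_sub (TWE.sech (x - γ')) (TWE.sech (x - γ))
        have h4 := abs_sub (TWE.sech (x - γ')) (TWE.sech (x - γ))
        rw [abs_of_nonneg (TWE.sech_pos _).le, abs_of_nonneg (TWE.sech_pos _).le] at h4
        linarith
      have h5 : (TWE.sech (x - γ') - TWE.sech (x - γ))^2
          = |TWE.sech (x - γ') - TWE.sech (x - γ)| * |TWE.sech (x - γ') - TWE.sech (x - γ)| := by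
        rw [← abs_mul, ← sq, abs_of_nonneg (sq_nonneg _)]
      rw [h5]
      exact mul_le_mul hlip hexp (abs_nonneg _) hd0
    have hI1 : Integrable (fun x => d * (e^2 * TWE.sech (x - γ)^2)) :=
      (((TWE.integrable_sech_sq_shift γ).const_mul (e^2)).const_mul d)
    have hI2 : Integrable (fun x => d * (2*e*TWE.sech (x - γ))) :=
      (((TWE.integrable_sech_shift γ).const_mul (2*e)).const_mul d)
    have hcontθ : Continuous fun x => thetaStar (x - γ') - thetaStar (x - γ) :=
      (TWE.continuous_thetaStar.comp (continuous_id.sub continuous_const)).sub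
        (TWE.continuous_thetaStar.comp (continuous_id.sub continuous_const))
    have hconts : Continuous fun x => TWE.sech (x - γ') - TWE.sech (x - γ) :=
      (TWE.continuous_sech_shift γ').sub (TWE.continuous_sech_shift γ)
    have hfA : Integrable (fun x => (thetaStar (x - γ') - thetaStar (x - γ))^2) := by
      refine hI1.mono' ((hcontθ.pow 2).aestronglyMeasurable) ?_
      filter_upwards with x
      rw [Real.norm_eq_abs, abs_of_nonneg (sq_nonneg _)]
      exact hptA x
    have hfB : Integrable (fun x => (TWE.sech (x - γ') - TWE.sech (x - γ))^2) := by
      refine hI2.mono' ((hconts.pow 2).aestronglyMeasurable) ?_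
      filter_upwards with x
      rw [Real.norm_eq_abs, abs_of_nonneg (sq_nonneg _)]
      exact hptB x
    have hA : (∫ x : ℝ, (thetaStar (x - γ') - thetaStar (x - γ))^2) ≤ d * (e^2 * C₂) := by
      have h6 := integral_mono hfA hI1 hptA
      have h7 : (∫ x : ℝ, d * (e^2 * TWE.sech (x - γ)^2)) = d * (e^2 * C₂) := by
        rw [integral_const_mul, integral_const_mul, hC₂def]
        have : (∫ x : ℝ, TWE.sech (x - γ)^2) = ∫ x : ℝ, TWE.sech x ^ 2 :=
          integral_sub_right_eq_self (fun x => TWE.sech x ^ 2) γ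
        rw [this]
      linarith
    have hB : (∫ x : ℝ, (TWE.sech (x - γ') - TWE.sech (x - γ))^2) ≤ d * (2*e*C₁) := by
      have h6 := integral_mono hfB hI2 hptB
      have h7 : (∫ x : ℝ, d * (2*e*TWE.sech (x - γ))) = d * (2*e*C₁) := by
        rw [integral_const_mul, integral_const_mul, hC₁def]
        have : (∫ x : ℝ, TWE.sech (x - γ)) = ∫ x : ℝ, TWE.sech x :=
          integral_sub_right_eq_self (fun x => TWE.sech x) γ
        rw [this]
      linarith
    have hfinal : H1normSq (fun x => thetaStar (x - γ') - thetaStar (x - γ))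
        ≤ d * (e^2*C₂ + 2*e*C₁) := by
      unfold H1normSq
      rw [hderiv]
      have := add_le_add hA hB
      calc (∫ x : ℝ, (thetaStar (x - γ') - thetaStar (x - γ))^2)
            + ∫ x : ℝ, (TWE.sech (x - γ') - TWE.sech (x - γ))^2
          ≤ d * (e^2 * C₂) + d * (2*e*C₁) := add_le_add hA hB
        _ = d * (e^2*C₂ + 2*e*C₁) := by ring
    have hstep : d * (e^2*C₂ + 2*e*C₁) < ε := by
      have h8 : d * (e^2*C₂ + 2*e*C₁) ≤ d * D := by
        rw [hDdef]; nlinarith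
      have h9 : d * D < (ε / D) * D := by
        apply mul_lt_mul_of_pos_right hdD hDpos
      rw [div_mul_cancel₀ _ hDpos.ne'] at h9
      linarith
    linarith
  · -- Part 3 : strict inequality
    intro γstar _ γ _
    rw [TWE.Es_decomp s hc hs0 hsle1 γ, TWE.Es_one]
    have := TWE.pos_part s K hK hs0 hsle1 x₀ hx₀lt γ
    linarith
  · -- Part 4 : atTop
    set b : ℝ := a + 1 with hbdef
    have hb0 : 0 ≤ b := by linarith
    have hsupp' : ∀ x : ℝ, b ≤ |x| → s x = 1 := fun x hx => hsupp x (by linarith)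
    rw [TWE.Es_one]
    have hcongr : (fun γ : ℝ => Es s (fun x => thetaStar (x - γ)))
        = fun γ : ℝ => (∫ x : ℝ, TWE.sech x ^ 2) - ∫ x : ℝ, TWE.sech (x - γ)^2 * (1 - s x) :=
      funext fun γ => TWE.Es_decomp s hc hs0 hsle1 γ
    rw [hcongr]
    have hG : Tendsto (fun γ : ℝ => ∫ x : ℝ, TWE.sech (x - γ)^2 * (1 - s x)) atTop (nhds 0) := by
      apply squeeze_zero_norm' (a := fun γ : ℝ => TWE.sech (γ - b)^2 * (2*b))
      · filter_upwards [eventually_ge_atTop b] with γ hγ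
        have hbγ : b ≤ |γ| := le_trans hγ (le_abs_self γ)
        have h10 := TWE.G_le s hs0 hsle1 b hb0 hsupp' γ hbγ
        rw [Real.norm_eq_abs]
        rwa [abs_of_nonneg (le_trans hb0 hγ)] at h10
      · have h11 := (TWE.tendsto_sech_sq_zero.comp
          (tendsto_atTop_add_const_right atTop (-b) tendsto_id)).mul_const (2*b)
        simpa [Function.comp, sub_eq_add_neg] using h11
    have h12 := hG.const_sub (∫ x : ℝ, TWE.sech x ^ 2)
    simpa using h12
  · -- Part 5 : atBot
    set b : ℝ := a + 1 with hbdef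
    have hb0 : 0 ≤ b := by linarith
    have hsupp' : ∀ x : ℝ, b ≤ |x| → s x = 1 := fun x hx => hsupp x (by linarith)
    rw [TWE.Es_one]
    have hcongr : (fun γ : ℝ => Es s (fun x => thetaStar (x - γ)))
        = fun γ : ℝ => (∫ x : ℝ, TWE.sech x ^ 2) - ∫ x : ℝ, TWE.sech (x - γ)^2 * (1 - s x) :=
      funext fun γ => TWE.Es_decomp s hc hs0 hsle1 γ
    rw [hcongr]
    have hG : Tendsto (fun γ : ℝ => ∫ x : ℝ, TWE.sech (x - γ)^2 * (1 - s x)) atBot (nhds 0) := by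
      apply squeeze_zero_norm' (a := fun γ : ℝ => TWE.sech (-γ - b)^2 * (2*b))
      · filter_upwards [eventually_le_atBot (-b)] with γ hγ
        have hγ0 : γ ≤ 0 := by linarith
        have hbγ : b ≤ |γ| := by rw [abs_of_nonpos hγ0]; linarith
        have h10 := TWE.G_le s hs0 hsle1 b hb0 hsupp' γ hbγ
        rw [Real.norm_eq_abs]
        rwa [abs_of_nonpos hγ0] at h10
      · have h11 := (TWE.tendsto_sech_sq_zero.comp
          (tendsto_atTop_add_const_right atBot (-b) tendsto_neg_atBot_atTop)).mul_const (2*b)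
        simpa [Function.comp, sub_eq_add_neg] using h11
    have h12 := hG.const_sub (∫ x : ℝ, TWE.sech x ^ 2)
    simpa using h12
end
end
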